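/- arXiv:1307.6986 — 7 statements merged into one kernel-verified Lean document; each statement's English description precedes it below -/
import Mathlib

section
/- Let |1⟩,|2⟩,|3⟩ be the standard orthonormal basis of ℂ³ and |ψ⟩ = (|1⟩+|2⟩+|3⟩)/√3. Define the 3-outcome POVM A = (A_1, A_2, A_3) with A_i = (1/2)(1 − |i⟩⟨i|), and the 2-outcome POVM B = (B_1, B_2) with B_1 = (1/2)|ψ⟩⟨ψ| and B_2 = 1 − B_1. Then A and B are coexistent but not jointly measurable. -/
/-!
Both POVMs have their ranges inside the range of the fair mixture of the standard-basis
measurement `(|i⟩⟨i|)ᵢ` with the projective measurement `(|ψ⟩⟨ψ|, 1 - |ψ⟩⟨ψ|)`: `A_k` is the sum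
of the pieces `½|i⟩⟨i|` with `i ≠ k`, and `B_1` is the piece `½|ψ⟩⟨ψ|`. With at most three
outcomes, every outcome set or its complement has at most one element, and ranges are closed
under `E ↦ 1 - E`, so this covers all outcome sets.

A joint effect `J_{k1}` lies below both `A_k` and `B_1`, so it annihilates `|k⟩ ∈ ker A_k` and
`|1⟩ - |k⟩ ∈ ker B_1`, hence `|1⟩`; summing over `k` would give `B_1|1⟩ = 0`.
-/

open Matrix Finset
open scoped ComplexOrder

/-- An effect on `ℂ^d`: a matrix `E` with `0 ≤ E ≤ 1`, i.e. both `E` and `1 - E`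
are positive semidefinite. -/
def IsEffect {d : ℕ} (E : Matrix (Fin d) (Fin d) ℂ) : Prop :=
  E.PosSemidef ∧ (1 - E).PosSemidef

/-- An `n`-outcome POVM: a tuple of effects summing to the identity. -/
def IsPOVM {d n : ℕ} (A : Fin n → Matrix (Fin d) (Fin d) ℂ) : Prop :=
  (∀ k, IsEffect (A k)) ∧ ∑ k, A k = 1

/-- Two finite POVMs are coexistent if their ranges (sums of effects over arbitrary
outcome subsets) are contained in the range of a single POVM `M`. -/
def Coexistent {d n m : ℕ} (A : Fin n → Matrix (Fin d) (Fin d) ℂ)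
    (B : Fin m → Matrix (Fin d) (Fin d) ℂ) : Prop :=
  ∃ (N : ℕ) (M : Fin N → Matrix (Fin d) (Fin d) ℂ), IsPOVM M ∧
    (∀ X : Finset (Fin n), ∃ Z : Finset (Fin N), ∑ k ∈ X, A k = ∑ l ∈ Z, M l) ∧
    (∀ Y : Finset (Fin m), ∃ Z : Finset (Fin N), ∑ j ∈ Y, B j = ∑ l ∈ Z, M l)

/-- Two finite POVMs are jointly measurable if they are the margins of a single
POVM `J` indexed by pairs of outcomes. -/
def JointlyMeasurable {d n m : ℕ} (A : Fin n → Matrix (Fin d) (Fin d) ℂ)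
    (B : Fin m → Matrix (Fin d) (Fin d) ℂ) : Prop :=
  ∃ J : Fin n → Fin m → Matrix (Fin d) (Fin d) ℂ,
    (∀ k j, (J k j).PosSemidef) ∧
    (∀ k, ∑ j, J k j = A k) ∧
    (∀ j, ∑ k, J k j = B j)

/-- The unit vector `|ψ⟩ = (|1⟩ + |2⟩ + |3⟩)/√3` in `ℂ³`. -/
noncomputable def ψ : Fin 3 → ℂ := fun _ => 1 / (Real.sqrt 3 : ℂ)

/-- The effects `A_i = (1/2)(1 - |i⟩⟨i|)` on `ℂ³`. -/
noncomputable def Aeff (i : Fin 3) : Matrix (Fin 3) (Fin 3) ℂ :=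
  (1 / 2 : ℂ) • (1 - Matrix.single i i 1)

/-- The effect `B_1 = (1/2)|ψ⟩⟨ψ|` on `ℂ³`. -/
noncomputable def Beff : Matrix (Fin 3) (Fin 3) ℂ :=
  (1 / 2 : ℂ) • Matrix.vecMulVec ψ (star ψ)
namespace Matrix

variable {n : Type*} [Fintype n]

theorem PosSemidef.of_isHermitian_of_isIdempotentElem {P : Matrix n n ℂ} (hP : P.IsHermitian)
    (hPP : IsIdempotentElem P) : P.PosSemidef := by
  simpa [hP.eq, hPP.eq] using posSemidef_conjTranspose_mul_self P

theorem PosSemidef.mulVec_eq_zero_of_sum_mulVec_eq_zero {ι : Type*} {s : Finset ι}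
    {P : ι → Matrix n n ℂ} (hP : ∀ i ∈ s, (P i).PosSemidef) {v : n → ℂ}
    (hv : (∑ i ∈ s, P i) *ᵥ v = 0) {i : ι} (hi : i ∈ s) : P i *ᵥ v = 0 := by
  have hsum : ∑ i ∈ s, star v ⬝ᵥ P i *ᵥ v = 0 := by
    simp_rw [← dotProduct_sum, ← sum_mulVec, hv, dotProduct_zero]
  have hterm := (sum_eq_zero_iff_of_nonneg fun i hi => (hP i hi).dotProduct_mulVec_nonneg v).mp
    hsum i hi
  exact ((hP i hi).dotProduct_mulVec_zero_iff v).mp hterm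

end Matrix

section POVM

variable {d : ℕ}

theorem isEffect_of_isHermitian_of_isIdempotentElem {P : Matrix (Fin d) (Fin d) ℂ}
    (hP : P.IsHermitian) (hPP : IsIdempotentElem P) : IsEffect P :=
  ⟨.of_isHermitian_of_isIdempotentElem hP hPP,
    .of_isHermitian_of_isIdempotentElem (isHermitian_one.sub hP) hPP.one_sub⟩

theorem IsEffect.smul {E : Matrix (Fin d) (Fin d) ℂ} (hE : IsEffect E) {t : ℂ} (ht₀ : 0 ≤ t)
    (ht₁ : t ≤ 1) : IsEffect (t • E) := by
  refine ⟨hE.1.smul ht₀, ?_⟩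
  have h : 1 - t • E = t • (1 - E) + (1 - t) • 1 := by
    rw [smul_sub, sub_smul, one_smul]; abel
  rw [h]
  exact (hE.2.smul ht₀).add (PosSemidef.one.smul (sub_nonneg.mpr ht₁))

theorem IsPOVM.append_smul {n m : ℕ} {A : Fin n → Matrix (Fin d) (Fin d) ℂ}
    {B : Fin m → Matrix (Fin d) (Fin d) ℂ} (hA : IsPOVM A) (hB : IsPOVM B) {t : ℂ} (ht₀ : 0 ≤ t)
    (ht₁ : t ≤ 1) : IsPOVM (Fin.append (t • A) ((1 - t) • B)) := by
  refine ⟨fun i => ?_, ?_⟩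
  · induction i using Fin.addCases with
    | left k => simpa using (hA.1 k).smul ht₀ ht₁
    | right j => simpa using (hB.1 j).smul (sub_nonneg.mpr ht₁) (sub_le_self 1 ht₀)
  · rw [Fin.sum_univ_add]
    simp [← smul_sum, hA.2, hB.2]

theorem isPOVM_single : IsPOVM fun i : Fin d => single i i (1 : ℂ) := by
  refine ⟨fun i => isEffect_of_isHermitian_of_isIdempotentElem ?_ ?_, ?_⟩
  · simp [IsHermitian]
  · simp [IsIdempotentElem]
  · simp_rw [← diagonal_single]
    simpa [Finset.univ_sum_single] using
      (map_sum (diagonalAddMonoidHom (Fin d) ℂ) (fun i => Pi.single i 1) univ).symm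

theorem isPOVM_vecMulVec {v : Fin d → ℂ} (hv : star v ⬝ᵥ v = 1) :
    IsPOVM ![vecMulVec v (star v), 1 - vecMulVec v (star v)] := by
  have hP : (vecMulVec v (star v)).IsHermitian := by simp [IsHermitian]
  have hPP : IsIdempotentElem (vecMulVec v (star v)) := by
    simp [IsIdempotentElem, vecMulVec_mul_vecMulVec, hv]
  refine ⟨Fin.forall_fin_two.2 ⟨?_, ?_⟩, by simp⟩
  · exact isEffect_of_isHermitian_of_isIdempotentElem hP hPP
  · exact isEffect_of_isHermitian_of_isIdempotentElem (isHermitian_one.sub hP) hPP.one_sub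

end POVM

section Range

variable {d n N : ℕ}

def povmRange (M : Fin N → Matrix (Fin d) (Fin d) ℂ) : Set (Matrix (Fin d) (Fin d) ℂ) :=
  {E | ∃ Z : Finset (Fin N), E = ∑ l ∈ Z, M l}

theorem one_sub_mem_povmRange {M : Fin N → Matrix (Fin d) (Fin d) ℂ} (hM : ∑ l, M l = 1)
    {E : Matrix (Fin d) (Fin d) ℂ} (hE : E ∈ povmRange M) : 1 - E ∈ povmRange M := by
  obtain ⟨Z, rfl⟩ := hE
  exact ⟨Zᶜ, by rw [← hM, ← sum_compl_add_sum Z, add_sub_cancel_right]⟩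

theorem sum_mem_povmRange_of_card_le_one {A : Fin n → Matrix (Fin d) (Fin d) ℂ}
    {M : Fin N → Matrix (Fin d) (Fin d) ℂ} (hAM : ∀ k, A k ∈ povmRange M) {X : Finset (Fin n)}
    (hX : #X ≤ 1) : ∑ k ∈ X, A k ∈ povmRange M := by
  rcases X.eq_empty_or_nonempty with rfl | hne
  · exact ⟨∅, by simp⟩
  · obtain ⟨k, rfl⟩ := card_eq_one.mp (le_antisymm hX hne.card_pos)
    rw [sum_singleton]
    exact hAM k

theorem sum_mem_povmRange_of_le_three {A : Fin n → Matrix (Fin d) (Fin d) ℂ}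
    {M : Fin N → Matrix (Fin d) (Fin d) ℂ} (hn : n ≤ 3) (hA : ∑ k, A k = 1) (hM : ∑ l, M l = 1)
    (hAM : ∀ k, A k ∈ povmRange M) (X : Finset (Fin n)) : ∑ k ∈ X, A k ∈ povmRange M := by
  have hcard : #X + #Xᶜ = n := by
    rw [card_add_card_compl, Fintype.card_fin]
  rcases le_or_gt #X 1 with hX | hX
  · exact sum_mem_povmRange_of_card_le_one hAM hX
  · have hsum : ∑ k ∈ X, A k = 1 - ∑ k ∈ Xᶜ, A k := by
      rw [← hA, ← sum_compl_add_sum X, add_sub_cancel_left]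
    rw [hsum]
    exact one_sub_mem_povmRange hM (sum_mem_povmRange_of_card_le_one hAM (by omega))

theorem coexistent_of_le_three {m : ℕ} {A : Fin n → Matrix (Fin d) (Fin d) ℂ}
    {B : Fin m → Matrix (Fin d) (Fin d) ℂ} {M : Fin N → Matrix (Fin d) (Fin d) ℂ}
    (hn : n ≤ 3) (hm : m ≤ 3) (hA : ∑ k, A k = 1) (hB : ∑ j, B j = 1) (hM : IsPOVM M)
    (hAM : ∀ k, A k ∈ povmRange M) (hBM : ∀ j, B j ∈ povmRange M) : Coexistent A B :=
  ⟨N, M, hM, sum_mem_povmRange_of_le_three hn hA hM.2 hAM,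
    sum_mem_povmRange_of_le_three hm hB hM.2 hBM⟩

end Range

theorem not_jointlyMeasurable_of_mulVec {d n m : ℕ} {A : Fin n → Matrix (Fin d) (Fin d) ℂ}
    {B : Fin m → Matrix (Fin d) (Fin d) ℂ} (j : Fin m) (x : Fin d → ℂ) (u : Fin n → Fin d → ℂ)
    (hA : ∀ k, A k *ᵥ u k = 0) (hB : ∀ k, B j *ᵥ (x - u k) = 0) (hBx : B j *ᵥ x ≠ 0) :
    ¬ JointlyMeasurable A B := by
  rintro ⟨J, hJ, hJA, hJB⟩
  have hJu (k : Fin n) : J k j *ᵥ u k = 0 :=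
    PosSemidef.mulVec_eq_zero_of_sum_mulVec_eq_zero (fun j' _ => hJ k j')
      (by rw [hJA]; exact hA k) (mem_univ j)
  have hJxu (k : Fin n) : J k j *ᵥ (x - u k) = 0 :=
    PosSemidef.mulVec_eq_zero_of_sum_mulVec_eq_zero (fun k' _ => hJ k' j)
      (by rw [hJB]; exact hB k) (mem_univ k)
  apply hBx
  rw [← hJB, sum_mulVec]
  refine sum_eq_zero fun k _ => ?_
  rw [← sub_add_cancel x (u k), mulVec_add, hJxu, hJu, add_zero]

theorem star_ψ_dotProduct_ψ : star ψ ⬝ᵥ ψ = 1 := by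
  have h : ((Real.sqrt 3 : ℝ) : ℂ) ^ 2 = 3 := by
    rw [← Complex.ofReal_pow]; simp
  simp [ψ, dotProduct]
  field_simp
  exact h.symm

noncomputable def refinementPOVM : Fin (3 + 2) → Matrix (Fin 3) (Fin 3) ℂ :=
  Fin.append ((1 / 2 : ℂ) • fun i => single i i 1)
    ((1 - 1 / 2 : ℂ) • ![vecMulVec ψ (star ψ), 1 - vecMulVec ψ (star ψ)])

theorem isPOVM_refinementPOVM : IsPOVM refinementPOVM :=
  isPOVM_single.append_smul (isPOVM_vecMulVec star_ψ_dotProduct_ψ)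
    (by norm_num [Complex.le_def]) (by norm_num [Complex.le_def])

theorem Aeff_eq_sum_erase (k : Fin 3) :
    Aeff k = ∑ j ∈ univ.erase k, (1 / 2 : ℂ) • single j j 1 := by
  rw [← smul_sum, sum_erase_eq_sub (mem_univ k), isPOVM_single.2]
  rfl

theorem sum_Aeff : ∑ k, Aeff k = 1 := by
  simp only [Aeff, ← smul_sum, sum_sub_distrib, isPOVM_single.2]
  ext i j
  simp [one_apply, ofNat_apply]
  split_ifs <;> norm_num

theorem Aeff_mem_povmRange (k : Fin 3) : Aeff k ∈ povmRange refinementPOVM :=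
  ⟨(univ.erase k).map (Fin.castAddEmb 2), by
    simp only [Aeff_eq_sum_erase, sum_map, Fin.castAddEmb_apply, refinementPOVM,
      Fin.append_left]
    rfl⟩

theorem Beff_mem_povmRange : Beff ∈ povmRange refinementPOVM :=
  ⟨{Fin.natAdd 3 0}, by norm_num [Beff, refinementPOVM]⟩

theorem Aeff_mulVec_single (k : Fin 3) : Aeff k *ᵥ Pi.single k 1 = 0 := by
  ext i; simp [Aeff, single_apply, one_apply, eq_comm]

theorem Beff_mulVec_sub_single (k : Fin 3) : Beff *ᵥ (Pi.single 0 1 - Pi.single k 1) = 0 := by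
  simp [Beff, smul_mulVec, vecMulVec_mulVec, dotProduct_sub, ψ]

theorem Beff_mulVec_single_ne_zero : Beff *ᵥ Pi.single 0 1 ≠ 0 := by
  simp [Beff, funext_iff, vecMulVec_apply, ψ]

/-- The POVMs `A = (A_1, A_2, A_3)` and `B = (B_1, 1 - B_1)` on `ℂ³` are coexistent
but not jointly measurable. -/
theorem coexistent_not_jointlyMeasurable :
    Coexistent Aeff ![Beff, 1 - Beff] ∧ ¬ JointlyMeasurable Aeff ![Beff, 1 - Beff] :=
  ⟨coexistent_of_le_three le_rfl (by norm_num) sum_Aeff (by simp) isPOVM_refinementPOVM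
      Aeff_mem_povmRange
      (Fin.forall_fin_two.2 ⟨Beff_mem_povmRange,
        one_sub_mem_povmRange isPOVM_refinementPOVM.2 Beff_mem_povmRange⟩),
    not_jointlyMeasurable_of_mulVec 0 (Pi.single 0 1) (fun k => Pi.single k 1) Aeff_mulVec_single
      Beff_mulVec_sub_single Beff_mulVec_single_ne_zero⟩
end

section
/- Let |1⟩,|2⟩,|3⟩ be the standard orthonormal basis of ℂ³ and |ψ⟩ = (|1⟩+|2⟩+|3⟩)/√3. Define A_i = (1/2)(1 − |i⟩⟨i|) for i = 1,2,3, B_1 = (1/2)|ψ⟩⟨ψ|, B_2 = 1 − B_1. Then there exists no family of positive semidefinite 3×3 complex matrices J_{ij} (i ∈ {1,2,3}, j ∈ {1,2}) satisfying J_{i1} + J_{i2} = A_i for all i and ∑_{i=1}^3 J_{ij} = B_j for j = 1,2. That is, the POVMs A = (A_1,A_2,A_3) and B = (B_1,B_2) are not jointly measurable. -/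
open Matrix Finset
open scoped ComplexOrder

/-! Put `C i = J i 0`. Since `C i ≤ A i` and `A i` vanishes at `(i, i)`, the `i`-th row and column
of `C i` vanish, so each off-diagonal entry of `B₁ = (1/6)·𝟙𝟙ᵀ` is carried by a single `C m`.
Cauchy–Schwarz for the entry `(0, 1)` of `C 2` gives `(1/6)² ≤ (C 2)₀₀ (C 2)₁₁` with both factors
at most `1/6`, which forces `(C 1)₀₀ = 0`; then the row `0` of `C 1` vanishes, although
`(C 1)₀₂ = 1/6`. -/

namespace Matrix.PosSemidef

variable {n 𝕜 : Type*} [RCLike 𝕜] {M : Matrix n n 𝕜}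

theorem norm_apply_sq_le (hM : M.PosSemidef) (i j : n) :
    ‖M i j‖ ^ 2 ≤ RCLike.re (M i i) * RCLike.re (M j j) := by
  have hdet := (hM.submatrix ![i, j]).det_nonneg
  simp only [det_fin_two, submatrix_apply, cons_val_zero, cons_val_one] at hdet
  rwa [← hM.isHermitian.apply j i, ← hM.isHermitian.coe_re_apply_self i,
    ← hM.isHermitian.coe_re_apply_self j, RCLike.star_def, RCLike.mul_conj, ← RCLike.ofReal_mul,
    ← RCLike.ofReal_pow, ← RCLike.ofReal_sub, RCLike.ofReal_nonneg, sub_nonneg] at hdet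

theorem apply_eq_zero_of_diag_eq_zero_left (hM : M.PosSemidef) {i : n} (hi : M i i = 0) (j : n) :
    M i j = 0 := by
  have h := hM.norm_apply_sq_le i j
  rw [hi, map_zero, zero_mul] at h
  exact norm_eq_zero.1 (pow_eq_zero_iff two_ne_zero |>.1 (le_antisymm h (by positivity)))

theorem apply_eq_zero_of_diag_eq_zero_right (hM : M.PosSemidef) {i : n} (hi : M i i = 0)
    (j : n) : M j i = 0 := by
  rw [← hM.isHermitian.apply j i, hM.apply_eq_zero_of_diag_eq_zero_left hi j, star_zero]

end Matrix.PosSemidef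

theorem eq_zero_of_sum_posSemidef_eq_const {C : Fin 3 → Matrix (Fin 3) (Fin 3) ℂ}
    (hC : ∀ i, (C i).PosSemidef) (hdiag : ∀ i, C i i i = 0) {c : ℝ}
    (hsum : ∑ i, C i = of fun _ _ => (c : ℂ)) : c = 0 := by
  have hentry (k l : Fin 3) : C 0 k l + C 1 k l + C 2 k l = c := by
    simpa [Fin.sum_univ_three] using congrFun (congrFun hsum k) l
  have hrow (i l : Fin 3) : C i i l = 0 := (hC i).apply_eq_zero_of_diag_eq_zero_left (hdiag i) l
  have hcol (i l : Fin 3) : C i l i = 0 := (hC i).apply_eq_zero_of_diag_eq_zero_right (hdiag i) l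
  have h201 : C 2 0 1 = c := by simpa [hrow 0 1, hcol 1 0] using hentry 0 1
  have h102 : C 1 0 2 = c := by simpa [hrow 0 2, hcol 2 0] using hentry 0 2
  have h00 : (C 1 0 0).re + (C 2 0 0).re = c := by
    simpa [hrow 0 0] using congrArg Complex.re (hentry 0 0)
  have h11 : (C 0 1 1).re + (C 2 1 1).re = c := by
    simpa [hrow 1 1] using congrArg Complex.re (hentry 1 1)
  have hcs2 := (hC 2).norm_apply_sq_le 0 1
  have hcs1 := (hC 1).norm_apply_sq_le 0 2
  rw [h201, Complex.norm_real, Real.norm_eq_abs, sq_abs] at hcs2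
  rw [h102, Complex.norm_real, Real.norm_eq_abs, sq_abs] at hcs1
  simp only [RCLike.re_to_complex] at hcs1 hcs2
  have hre (i k : Fin 3) : 0 ≤ (C i k k).re := (Complex.nonneg_iff.1 (hC i).diag_nonneg).1
  have hc : 0 ≤ c := by linarith [hre 1 0, hre 2 0]
  have hca1 : c * (C 1 0 0).re ≤ 0 := by
    have hb2 : (C 2 1 1).re ≤ c := by linarith [hre 0 1]
    nlinarith [mul_le_mul_of_nonneg_left hb2 (hre 2 0)]
  have hc3 : c ^ 3 ≤ 0 := by
    nlinarith [mul_le_mul_of_nonneg_right hca1 (hre 1 2), mul_le_mul_of_nonneg_left hcs1 hc]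
  exact pow_eq_zero_iff three_ne_zero |>.1 (le_antisymm hc3 (by positivity))

theorem Aeff_apply_self (i : Fin 3) : Aeff i i i = 0 := by
  simp [Aeff]

theorem Beff_eq_const : Beff = of fun _ _ => ((1 / 6 : ℝ) : ℂ) := by
  have h3 : (Real.sqrt 3 : ℂ) ^ 2 = 3 := by
    rw [← Complex.ofReal_pow, Real.sq_sqrt (by norm_num)]
    norm_num
  ext k l
  simp only [Beff, ψ, Matrix.smul_apply, vecMulVec_apply, Pi.star_apply, star_div₀, star_one,
    Complex.star_def, Complex.conj_ofReal, of_apply, smul_eq_mul]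
  push_cast
  field_simp
  linear_combination -2 * h3

/-- There is no family of positive semidefinite matrices `J i j` with margins
`A = (A_1, A_2, A_3)` and `B = (B_1, 1 - B_1)`: the two POVMs are not jointly measurable. -/
theorem not_jointlyMeasurable :
    ¬ ∃ J : Fin 3 → Fin 2 → Matrix (Fin 3) (Fin 3) ℂ,
      (∀ i j, (J i j).PosSemidef) ∧
      (∀ i, ∑ j, J i j = Aeff i) ∧
      (∀ j, ∑ i, J i j = (![Beff, 1 - Beff]) j) := by
  rintro ⟨J, hJ, hA, hB⟩
  have hdiag (i : Fin 3) : J i 0 i i = 0 := by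
    have h := congrFun (congrFun (hA i) i) i
    rw [Fin.sum_univ_two, Matrix.add_apply, Aeff_apply_self] at h
    exact (add_eq_zero_iff_of_nonneg (hJ i 0).diag_nonneg (hJ i 1).diag_nonneg).1 h |>.1
  have hsum : ∑ i, J i 0 = of fun _ _ => ((1 / 6 : ℝ) : ℂ) := by
    simpa [Beff_eq_const] using hB 0
  exact absurd (eq_zero_of_sum_posSemidef_eq_const (fun i => hJ i 0) hdiag hsum) (by norm_num)
end

section
/- Let A = (A_1, 1 − A_1) and B = (B_1, 1 − B_1) be two 2-outcome POVMs on ℂ^d. Then A and B are coexistent if and only if they are jointly measurable. -/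
/-!
A joint POVM `J` of `A` and `B` is a POVM whose coarse-grainings give both `A` and `B`, so joint
measurability always implies coexistence. Conversely, if `A₁ = ∑_{l ∈ S} M_l` and
`B₁ = ∑_{l ∈ T} M_l` for one POVM `M`, sorting the outcomes of `M` by membership in `S` and `T`
gives a joint POVM with effects `∑_{S ∩ T} M`, `∑_{S \ T} M`, `∑_{T \ S} M`, `∑_{(S ∪ T)ᶜ} M`.
-/

open Matrix Finset
open scoped ComplexOrder

section

variable {d : ℕ}

lemma isPOVM_of_posSemidef {N : ℕ} {M : Fin N → Matrix (Fin d) (Fin d) ℂ}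
    (hM : ∀ l, (M l).PosSemidef) (hsum : ∑ l, M l = 1) : IsPOVM M := by
  refine ⟨fun l => ⟨hM l, ?_⟩, hsum⟩
  have hcompl : 1 - M l = ∑ l' ∈ univ.erase l, M l' := by
    rw [← hsum, ← add_sum_erase univ M (mem_univ l), add_sub_cancel_left]
  exact hcompl ▸ posSemidef_sum _ fun l' _ => hM l'

theorem JointlyMeasurable.coexistent {n m : ℕ} {A : Fin n → Matrix (Fin d) (Fin d) ℂ}
    {B : Fin m → Matrix (Fin d) (Fin d) ℂ} (hA : ∑ k, A k = 1) (h : JointlyMeasurable A B) :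
    Coexistent A B := by
  obtain ⟨J, hJ, hJA, hJB⟩ := h
  let e : Fin n × Fin m ≃ Fin (n * m) := finProdFinEquiv
  let M : Fin (n * m) → Matrix (Fin d) (Fin d) ℂ := fun l => J (e.symm l).1 (e.symm l).2
  have hM : ∀ s : Finset (Fin n × Fin m), ∑ l ∈ s.map e.toEmbedding, M l = ∑ p ∈ s, J p.1 p.2 :=
    fun s => by simp [M, sum_map]
  refine ⟨n * m, M, isPOVM_of_posSemidef (fun l => hJ _ _) ?_,
    fun X => ⟨(X ×ˢ univ).map e.toEmbedding, ?_⟩, fun Y => ⟨(univ ×ˢ Y).map e.toEmbedding, ?_⟩⟩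
  · rw [← e.sum_comp]
    simp [M, Fintype.sum_prod_type, hJA, hA]
  · rw [hM, sum_product]
    simp [hJA]
  · rw [hM, sum_product_right]
    simp [hJB]

lemma jointlyMeasurable_two_outcomes_of_posSemidef {P Q G : Matrix (Fin d) (Fin d) ℂ}
    (hG : G.PosSemidef) (hPG : (P - G).PosSemidef) (hQG : (Q - G).PosSemidef)
    (hPQG : (1 - P - Q + G).PosSemidef) :
    JointlyMeasurable ![P, 1 - P] ![Q, 1 - Q] := by
  refine ⟨![![G, P - G], ![Q - G, 1 - P - Q + G]], ?_, ?_, ?_⟩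
  · intro k j
    fin_cases k <;> fin_cases j <;> assumption
  · intro k
    fin_cases k <;> simp [Fin.sum_univ_two]
  · intro j
    fin_cases j
    · simp [Fin.sum_univ_two]
    · simp [Fin.sum_univ_two]
      abel

lemma jointlyMeasurable_of_subset_sums {N : ℕ} {M : Fin N → Matrix (Fin d) (Fin d) ℂ}
    (hM : IsPOVM M) (S T : Finset (Fin N)) :
    JointlyMeasurable ![∑ l ∈ S, M l, 1 - ∑ l ∈ S, M l] ![∑ l ∈ T, M l, 1 - ∑ l ∈ T, M l] := by
  have hpsd (s : Finset (Fin N)) : (∑ l ∈ s, M l).PosSemidef :=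
    posSemidef_sum s fun l _ => (hM.1 l).1
  have hS : ∑ l ∈ S, M l - ∑ l ∈ S ∩ T, M l = ∑ l ∈ S \ T, M l := by
    rw [← sum_inter_add_sum_sdiff S T M, add_sub_cancel_left]
  have hT : ∑ l ∈ T, M l - ∑ l ∈ S ∩ T, M l = ∑ l ∈ T \ S, M l := by
    rw [← sum_inter_add_sum_sdiff T S M, inter_comm, add_sub_cancel_left]
  have hST : 1 - ∑ l ∈ S, M l - ∑ l ∈ T, M l + ∑ l ∈ S ∩ T, M l = ∑ l ∈ (S ∪ T)ᶜ, M l := by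
    rw [← hM.2, ← sum_add_sum_compl (S ∪ T) M, sub_sub, ← sum_union_inter (s₁ := S) (s₂ := T)]
    abel
  exact jointlyMeasurable_two_outcomes_of_posSemidef (hpsd _) (hS ▸ hpsd _) (hT ▸ hpsd _)
    (hST ▸ hpsd _)

theorem Coexistent.jointlyMeasurable_of_two_outcomes {P Q : Matrix (Fin d) (Fin d) ℂ}
    (h : Coexistent ![P, 1 - P] ![Q, 1 - Q]) : JointlyMeasurable ![P, 1 - P] ![Q, 1 - Q] := by
  obtain ⟨N, M, hM, hP, hQ⟩ := h
  obtain ⟨S, hS⟩ := hP {0}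
  obtain ⟨T, hT⟩ := hQ {0}
  simp only [sum_singleton, cons_val_zero] at hS hT
  subst hS hT
  exact jointlyMeasurable_of_subset_sums hM S T

end

theorem coexistent_iff_jointlyMeasurable_of_two_outcomes_general {d : ℕ}
    (A1 B1 : Matrix (Fin d) (Fin d) ℂ) :
    Coexistent ![A1, 1 - A1] ![B1, 1 - B1] ↔
      JointlyMeasurable ![A1, 1 - A1] ![B1, 1 - B1] :=
  ⟨Coexistent.jointlyMeasurable_of_two_outcomes,
    JointlyMeasurable.coexistent (by simp [Fin.sum_univ_two])⟩

/-- Two 2-outcome POVMs are coexistent if and only if they are jointly measurable. -/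
theorem coexistent_iff_jointlyMeasurable_of_two_outcomes {d : ℕ}
    (A1 B1 : Matrix (Fin d) (Fin d) ℂ) (hA : IsEffect A1) (hB : IsEffect B1) :
    Coexistent ![A1, 1 - A1] ![B1, 1 - B1] ↔
      JointlyMeasurable ![A1, 1 - A1] ![B1, 1 - B1] :=
  coexistent_iff_jointlyMeasurable_of_two_outcomes_general A1 B1
end

section
/- Let A be an n-outcome POVM and B an m-outcome POVM on ℂ^d such that A_k − (1/(2n))·1 is positive semidefinite for every k and B_j − (1/(2m))·1 is positive semidefinite for every j. Then A and B are jointly measurable. -/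
open Matrix Finset
open scoped ComplexOrder

/-! If `A k ≥ α` and `B j ≥ β` with `n α + m β ≥ 1`, then
`J k j = (A k - α) / m + (B j - β) / n + (n α + m β - 1) / (n m)` is a sum of positive
semidefinite terms, and `∑ A = ∑ B = 1` makes its margins exactly `A` and `B`. -/

namespace JointlyMeasurable

variable {d n m : ℕ}

lemma of_subsingleton [Subsingleton (Matrix (Fin d) (Fin d) ℂ)]
    (A : Fin n → Matrix (Fin d) (Fin d) ℂ) (B : Fin m → Matrix (Fin d) (Fin d) ℂ) :
    JointlyMeasurable A B :=
  ⟨fun _ _ => 0, fun _ _ => .zero, fun _ => Subsingleton.elim _ _, fun _ => Subsingleton.elim _ _⟩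

noncomputable def uniformJoint (α β : ℝ) (A : Fin n → Matrix (Fin d) (Fin d) ℂ)
    (B : Fin m → Matrix (Fin d) (Fin d) ℂ) (k : Fin n) (j : Fin m) :
    Matrix (Fin d) (Fin d) ℂ :=
  (((m : ℝ)⁻¹ : ℝ) : ℂ) • (A k - (α : ℂ) • 1) + (((n : ℝ)⁻¹ : ℝ) : ℂ) • (B j - (β : ℂ) • 1)
    + (((n * α + m * β - 1) / (n * m) : ℝ) : ℂ) • 1

lemma uniformJoint_comm (α β : ℝ) (A : Fin n → Matrix (Fin d) (Fin d) ℂ)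
    (B : Fin m → Matrix (Fin d) (Fin d) ℂ) (k : Fin n) (j : Fin m) :
    uniformJoint α β A B k j = uniformJoint β α B A j k := by
  unfold uniformJoint
  rw [add_comm (_ • (A k - _)), add_comm ((n : ℝ) * α), mul_comm (n : ℝ) m]

lemma posSemidef_uniformJoint {α β : ℝ} {A : Fin n → Matrix (Fin d) (Fin d) ℂ}
    {B : Fin m → Matrix (Fin d) (Fin d) ℂ} (hA : ∀ k, (A k - (α : ℂ) • 1).PosSemidef)
    (hB : ∀ j, (B j - (β : ℂ) • 1).PosSemidef) (hαβ : 1 ≤ n * α + m * β) (k : Fin n)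
    (j : Fin m) : (uniformJoint α β A B k j).PosSemidef := by
  have smul_of_nonneg {c : ℝ} (hc : 0 ≤ c) {M : Matrix (Fin d) (Fin d) ℂ} (hM : M.PosSemidef) :
      ((c : ℂ) • M).PosSemidef :=
    hM.smul (Complex.zero_le_real.mpr hc)
  exact ((smul_of_nonneg (by positivity) (hA k)).add (smul_of_nonneg (by positivity) (hB j))).add
    (smul_of_nonneg (div_nonneg (by linarith) (by positivity)) .one)

lemma sum_uniformJoint (hn : n ≠ 0) (hm : m ≠ 0) (α β : ℝ) (A : Fin n → Matrix (Fin d) (Fin d) ℂ)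
    {B : Fin m → Matrix (Fin d) (Fin d) ℂ} (hB : ∑ j, B j = 1) (k : Fin n) :
    ∑ j, uniformJoint α β A B k j = A k := by
  simp only [uniformJoint, sum_add_distrib, sum_const, ← smul_sum, sum_sub_distrib, hB,
    card_univ, Fintype.card_fin, ← Nat.cast_smul_eq_nsmul ℂ]
  match_scalars <;> field_simp; ring

theorem of_ge_smul_one (hn : n ≠ 0) (hm : m ≠ 0) {α β : ℝ}
    {A : Fin n → Matrix (Fin d) (Fin d) ℂ} {B : Fin m → Matrix (Fin d) (Fin d) ℂ}
    (hA : ∑ k, A k = 1) (hB : ∑ j, B j = 1) (hAα : ∀ k, (A k - (α : ℂ) • 1).PosSemidef)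
    (hBβ : ∀ j, (B j - (β : ℂ) • 1).PosSemidef) (hαβ : 1 ≤ n * α + m * β) :
    JointlyMeasurable A B :=
  ⟨uniformJoint α β A B, posSemidef_uniformJoint hAα hBβ hαβ, sum_uniformJoint hn hm α β A hB,
    fun j => by simpa only [uniformJoint_comm] using sum_uniformJoint hm hn β α B hA j⟩

end JointlyMeasurable

/-- If all effects of the POVM `A` dominate `1/(2n)` times the identity and all effects of
`B` dominate `1/(2m)` times the identity, then `A` and `B` are jointly measurable. -/
theorem jointlyMeasurable_of_effects_dominate {d n m : ℕ}
    (A : Fin n → Matrix (Fin d) (Fin d) ℂ) (B : Fin m → Matrix (Fin d) (Fin d) ℂ)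
    (hA : IsPOVM A) (hB : IsPOVM B)
    (hAbig : ∀ k, (A k - ((1 / (2 * (n : ℝ)) : ℝ) : ℂ) • 1).PosSemidef)
    (hBbig : ∀ j, (B j - ((1 / (2 * (m : ℝ)) : ℝ) : ℂ) • 1).PosSemidef) :
    JointlyMeasurable A B := by
  rcases eq_or_ne n 0 with rfl | hn
  · have := subsingleton_of_zero_eq_one (by simpa using hA.2)
    exact .of_subsingleton A B
  rcases eq_or_ne m 0 with rfl | hm
  · have := subsingleton_of_zero_eq_one (by simpa using hB.2)
    exact .of_subsingleton A B
  refine .of_ge_smul_one hn hm hA.2 hB.2 hAbig hBbig ?_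
  field_simp
  norm_num
end

section
/- The set of jointly measurable pairs has nonempty interior: for every d, n, m there exists ε > 0 such that whenever A is an n-outcome POVM and B an m-outcome POVM on ℂ^d with ‖A_k − (1/n)·1‖ < ε for all k and ‖B_j − (1/m)·1‖ < ε for all j (operator norm), the pair (A, B) is jointly measurable. In particular, the pair (I_n, I_m) of uniformly random observables, where I_n = (1/n·1, …, 1/n·1), has a neighborhood consisting of jointly measurable pairs. -/
open Matrix Finset
open scoped ComplexOrder

open scoped Matrix.Norms.L2Operator

/-!
The matrices `J k j = A k / m + B j / n - 1 / (n m)` have marginals `A` and `B` for any two POVMs.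
Moreover `J k j - 1 / (n m) = (A k - 1 / n) / m + (B j - 1 / m) / n` has operator norm at most
`ε (n + m) / (n m)`, so `J k j` is positive semidefinite as soon as `ε (n + m) ≤ 1`.
-/

open scoped MatrixOrder

theorem Matrix.posSemidef_of_norm_sub_smul_one_le {d : Type*} [Fintype d] [DecidableEq d]
    {Y : Matrix d d ℂ} (hY : Y.IsHermitian) {c : ℝ} (h : ‖Y - (c : ℂ) • 1‖ ≤ c) :
    Y.PosSemidef := by
  rw [Complex.coe_smul, ← Algebra.algebraMap_eq_smul_one] at h
  have hsa : IsSelfAdjoint (Y - algebraMap ℝ _ c) := hY.sub (IsSelfAdjoint.algebraMap _ (.all c))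
  have := (neg_le_neg (algebraMap_mono (Matrix d d ℂ) h)).trans hsa.neg_algebraMap_norm_le_self
  rw [← Matrix.nonneg_iff_posSemidef]
  simpa using this

section affineJoint

variable {d ι κ : Type*} [DecidableEq d] [Fintype ι] [Fintype κ]

noncomputable def affineJoint (A : ι → Matrix d d ℂ) (B : κ → Matrix d d ℂ)
    (k : ι) (j : κ) : Matrix d d ℂ :=
  (Fintype.card κ : ℂ)⁻¹ • A k + (Fintype.card ι : ℂ)⁻¹ • B j -
    ((Fintype.card ι : ℂ) * Fintype.card κ)⁻¹ • 1

theorem sum_affineJoint_right [Nonempty κ] (A : ι → Matrix d d ℂ) {B : κ → Matrix d d ℂ}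
    (hB : ∑ j, B j = 1) (k : ι) : ∑ j, affineJoint A B k j = A k := by
  have : (Fintype.card κ : ℂ) ≠ 0 := by simp
  simp only [affineJoint, sum_sub_distrib, sum_add_distrib, ← smul_sum, hB, sum_const, card_univ,
    ← Nat.cast_smul_eq_nsmul ℂ, smul_smul]
  match_scalars <;> field_simp; ring

theorem sum_affineJoint_left [Nonempty ι] {A : ι → Matrix d d ℂ} (hA : ∑ k, A k = 1)
    (B : κ → Matrix d d ℂ) (j : κ) : ∑ k, affineJoint A B k j = B j := by
  have : (Fintype.card ι : ℂ) ≠ 0 := by simp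
  simp only [affineJoint, sum_sub_distrib, sum_add_distrib, ← smul_sum, hA, sum_const, card_univ,
    ← Nat.cast_smul_eq_nsmul ℂ, smul_smul]
  match_scalars <;> field_simp; ring

theorem isHermitian_affineJoint {A : ι → Matrix d d ℂ} {B : κ → Matrix d d ℂ} {k : ι} {j : κ}
    (hA : (A k).IsHermitian) (hB : (B j).IsHermitian) : (affineJoint A B k j).IsHermitian := by
  have hinv (r : ℕ) : IsSelfAdjoint (r : ℂ)⁻¹ := by simp [isSelfAdjoint_iff]
  exact ((hA.smul (hinv _)).add (hB.smul (hinv _))).sub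
    (isHermitian_one.smul (by simpa using hinv (Fintype.card ι * Fintype.card κ)))

theorem affineJoint_sub_smul_one (A : ι → Matrix d d ℂ) (B : κ → Matrix d d ℂ) (k : ι) (j : κ) :
    affineJoint A B k j -
        (((Fintype.card ι : ℝ)⁻¹ * (Fintype.card κ : ℝ)⁻¹ : ℝ) : ℂ) • 1 =
      (((Fintype.card κ : ℝ)⁻¹ : ℝ) : ℂ) •
          (A k - (((Fintype.card ι : ℝ)⁻¹ : ℝ) : ℂ) • 1) +
        (((Fintype.card ι : ℝ)⁻¹ : ℝ) : ℂ) •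
          (B j - (((Fintype.card κ : ℝ)⁻¹ : ℝ) : ℂ) • 1) := by
  push_cast
  simp only [affineJoint]
  module

theorem posSemidef_affineJoint [Fintype d] [Nonempty ι] [Nonempty κ] {A : ι → Matrix d d ℂ}
    {B : κ → Matrix d d ℂ} {k : ι} {j : κ} (hA : (A k).IsHermitian) (hB : (B j).IsHermitian)
    {ε : ℝ} (hε : ε * (Fintype.card ι + Fintype.card κ) ≤ 1)
    (hAk : ‖A k - (((Fintype.card ι : ℝ)⁻¹ : ℝ) : ℂ) • 1‖ ≤ ε)
    (hBj : ‖B j - (((Fintype.card κ : ℝ)⁻¹ : ℝ) : ℂ) • 1‖ ≤ ε) :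
    (affineJoint A B k j).PosSemidef := by
  refine posSemidef_of_norm_sub_smul_one_le
    (c := (Fintype.card ι : ℝ)⁻¹ * (Fintype.card κ : ℝ)⁻¹) (isHermitian_affineJoint hA hB) ?_
  rw [affineJoint_sub_smul_one]
  set a : ℝ := (Fintype.card ι : ℝ)⁻¹
  set b : ℝ := (Fintype.card κ : ℝ)⁻¹
  have ha : 0 ≤ a := by positivity
  have hb : 0 ≤ b := by positivity
  have hscale : b * ε + a * ε = ε * (Fintype.card ι + Fintype.card κ) * (a * b) := by
    simp only [a, b]
    field_simp
  calc _ ≤ ‖(b : ℂ) • (A k - (a : ℂ) • 1)‖ + ‖(a : ℂ) • (B j - (b : ℂ) • 1)‖ := norm_add_le _ _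
    _ = b * ‖A k - (a : ℂ) • 1‖ + a * ‖B j - (b : ℂ) • 1‖ := by
      simp only [norm_smul, Complex.norm_real, Real.norm_of_nonneg ha, Real.norm_of_nonneg hb]
    _ ≤ b * ε + a * ε := by gcongr
    _ ≤ a * b := by rw [hscale]; exact mul_le_of_le_one_left (mul_nonneg ha hb) hε

end affineJoint

theorem IsPOVM.nonempty {d n : ℕ} [NeZero d] {A : Fin n → Matrix (Fin d) (Fin d) ℂ}
    (hA : IsPOVM A) : Nonempty (Fin n) := by
  by_contra h
  rw [not_nonempty_iff] at h
  simpa using hA.2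

theorem jointlyMeasurable_of_dim_zero {n m : ℕ} (A : Fin n → Matrix (Fin 0) (Fin 0) ℂ)
    (B : Fin m → Matrix (Fin 0) (Fin 0) ℂ) : JointlyMeasurable A B :=
  ⟨0, fun _ _ => .zero, fun _ => Subsingleton.elim _ _, fun _ => Subsingleton.elim _ _⟩

/-- Every pair of POVMs close enough (in operator norm) to the pair of uniformly random
observables `(I_n, I_m)` is jointly measurable. -/
theorem jointlyMeasurable_near_uniform (d n m : ℕ) :
    ∃ ε > (0 : ℝ), ∀ (A : Fin n → Matrix (Fin d) (Fin d) ℂ)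
      (B : Fin m → Matrix (Fin d) (Fin d) ℂ), IsPOVM A → IsPOVM B →
      (∀ k, ‖A k - ((1 / (n : ℝ) : ℝ) : ℂ) • 1‖ < ε) →
      (∀ j, ‖B j - ((1 / (m : ℝ) : ℝ) : ℂ) • 1‖ < ε) →
      JointlyMeasurable A B := by
  refine ⟨1 / ((n : ℝ) + m + 1), by positivity, fun A B hA hB hAε hBε => ?_⟩
  rcases d.eq_zero_or_pos with rfl | hd
  · exact jointlyMeasurable_of_dim_zero A B
  have := NeZero.of_pos hd
  have := hA.nonempty
  have := hB.nonempty
  have hε : 1 / ((n : ℝ) + m + 1) * (Fintype.card (Fin n) + Fintype.card (Fin m)) ≤ 1 := by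
    rw [Fintype.card_fin, Fintype.card_fin, div_mul_eq_mul_div, div_le_one (by positivity)]
    linarith
  refine ⟨affineJoint A B, fun k j => posSemidef_affineJoint (hA.1 k).1.1 (hB.1 j).1.1 hε ?_ ?_,
    sum_affineJoint_right A hB.2, sum_affineJoint_left hA.2 B⟩
  · simpa using (hAε k).le
  · simpa using (hBε j).le
end

section
/- The set of coexistent pairs of POVMs is convex: if (A, B) and (A', B') are two pairs consisting of an n-outcome POVM and an m-outcome POVM on ℂ^d, each pair coexistent, then for every λ ∈ [0,1] the pair (λA + (1−λ)A', λB + (1−λ)B') — i.e. the POVMs with effects λA_k + (1−λ)A'_k and λB_j + (1−λ)B'_j — is a pair of POVMs and is coexistent. -/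
open Matrix Finset
open scoped ComplexOrder

/-!
Convex combinations of effects are effects, so the mixed pair consists of POVMs. If `M` and
`M'` witness the coexistence of `(A, B)` and `(A', B')`, then the POVM on `N + N'` outcomes
with effects `λ M_l` followed by `(1 - λ) M'_l` witnesses the coexistence of the mixed pair:
a subset sum of the mixture of `A` and `A'` is `λ` times a subset sum of `M` plus `1 - λ` times
a subset sum of `M'`, which is a subset sum of the new POVM.
-/

namespace IsEffect

variable {d : ℕ} {P Q : Matrix (Fin d) (Fin d) ℂ}

lemma real_smul (hP : IsEffect P) {c : ℝ} (hc0 : 0 ≤ c) (hc1 : c ≤ 1) :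
    IsEffect ((c : ℂ) • P) := by
  have hc0' : (0 : ℂ) ≤ c := Complex.zero_le_real.mpr hc0
  have hc1' : (0 : ℂ) ≤ ((1 - c : ℝ) : ℂ) := Complex.zero_le_real.mpr (sub_nonneg.mpr hc1)
  refine ⟨hP.1.smul hc0', ?_⟩
  have hcompl : 1 - (c : ℂ) • P = (c : ℂ) • (1 - P) + ((1 - c : ℝ) : ℂ) • 1 := by
    push_cast
    module
  rw [hcompl]
  exact (hP.2.smul hc0').add (PosSemidef.one.smul hc1')

lemma convex_comb (hP : IsEffect P) (hQ : IsEffect Q) {a b : ℝ} (ha : 0 ≤ a) (hb : 0 ≤ b)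
    (hab : a + b = 1) : IsEffect ((a : ℂ) • P + (b : ℂ) • Q) := by
  have ha' : (0 : ℂ) ≤ a := Complex.zero_le_real.mpr ha
  have hb' : (0 : ℂ) ≤ b := Complex.zero_le_real.mpr hb
  refine ⟨(hP.1.smul ha').add (hQ.1.smul hb'), ?_⟩
  have hcompl : 1 - ((a : ℂ) • P + (b : ℂ) • Q) = (a : ℂ) • (1 - P) + (b : ℂ) • (1 - Q) := by
    rw [eq_sub_of_add_eq' hab]
    push_cast
    module
  rw [hcompl]
  exact (hP.2.smul ha').add (hQ.2.smul hb')

end IsEffect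

theorem Fin.exists_finset_sum_append_eq {α : Type*} [AddCommMonoid α] {N N' : ℕ}
    (f : Fin N → α) (g : Fin N' → α) (Z : Finset (Fin N)) (Z' : Finset (Fin N')) :
    ∃ W : Finset (Fin (N + N')), ∑ l ∈ W, Fin.append f g l = ∑ l ∈ Z, f l + ∑ l ∈ Z', g l := by
  refine ⟨(Z.disjSum Z').map finSumFinEquiv.toEmbedding, ?_⟩
  simp [Finset.sum_disjSum]

section Mixture

variable {d N N' : ℕ}

/-- The POVM that performs `M` with probability `a` and `M'` with probability `b`,
keeping track of which of the two was performed. -/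
def povmMixture (a b : ℝ) (M : Fin N → Matrix (Fin d) (Fin d) ℂ)
    (M' : Fin N' → Matrix (Fin d) (Fin d) ℂ) : Fin (N + N') → Matrix (Fin d) (Fin d) ℂ :=
  Fin.append (fun l => (a : ℂ) • M l) (fun l => (b : ℂ) • M' l)

lemma IsPOVM.convex_comb {n : ℕ} {A A' : Fin n → Matrix (Fin d) (Fin d) ℂ}
    (hA : IsPOVM A) (hA' : IsPOVM A') {a b : ℝ} (ha : 0 ≤ a) (hb : 0 ≤ b) (hab : a + b = 1) :
    IsPOVM (fun k => (a : ℂ) • A k + (b : ℂ) • A' k) := by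
  refine ⟨fun k => (hA.1 k).convex_comb (hA'.1 k) ha hb hab, ?_⟩
  rw [sum_add_distrib, ← smul_sum, ← smul_sum, hA.2, hA'.2,
    Convex.combo_self (mod_cast hab : (a : ℂ) + b = 1)]

lemma IsPOVM.mixture {M : Fin N → Matrix (Fin d) (Fin d) ℂ}
    {M' : Fin N' → Matrix (Fin d) (Fin d) ℂ} (hM : IsPOVM M) (hM' : IsPOVM M') {a b : ℝ}
    (ha : 0 ≤ a) (hb : 0 ≤ b) (hab : a + b = 1) : IsPOVM (povmMixture a b M M') := by
  refine ⟨fun i => ?_, ?_⟩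
  · cases i using Fin.addCases with
    | left l => simpa [povmMixture] using (hM.1 l).real_smul ha (by linarith)
    | right l => simpa [povmMixture] using (hM'.1 l).real_smul hb (by linarith)
  · rw [povmMixture, Fin.sum_univ_add]
    simp only [Fin.append_left, Fin.append_right]
    rw [← smul_sum, ← smul_sum, hM.2, hM'.2, Convex.combo_self (mod_cast hab : (a : ℂ) + b = 1)]

lemma exists_sum_povmMixture_eq {n : ℕ} {A A' : Fin n → Matrix (Fin d) (Fin d) ℂ}
    {M : Fin N → Matrix (Fin d) (Fin d) ℂ} {M' : Fin N' → Matrix (Fin d) (Fin d) ℂ}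
    (hMA : ∀ X : Finset (Fin n), ∃ Z : Finset (Fin N), ∑ k ∈ X, A k = ∑ l ∈ Z, M l)
    (hMA' : ∀ X : Finset (Fin n), ∃ Z : Finset (Fin N'), ∑ k ∈ X, A' k = ∑ l ∈ Z, M' l)
    (a b : ℝ) (X : Finset (Fin n)) :
    ∃ W : Finset (Fin (N + N')),
      ∑ k ∈ X, ((a : ℂ) • A k + (b : ℂ) • A' k) = ∑ l ∈ W, povmMixture a b M M' l := by
  obtain ⟨Z, hZ⟩ := hMA X
  obtain ⟨Z', hZ'⟩ := hMA' X
  obtain ⟨W, hW⟩ := Fin.exists_finset_sum_append_eq (fun l => (a : ℂ) • M l)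
    (fun l => (b : ℂ) • M' l) Z Z'
  refine ⟨W, ?_⟩
  rw [povmMixture, hW, sum_add_distrib, ← smul_sum, ← smul_sum, ← smul_sum, ← smul_sum, hZ, hZ']

end Mixture

theorem Coexistent.convex_comb {d n m : ℕ}
    {A A' : Fin n → Matrix (Fin d) (Fin d) ℂ} {B B' : Fin m → Matrix (Fin d) (Fin d) ℂ}
    (h : Coexistent A B) (h' : Coexistent A' B') {a b : ℝ} (ha : 0 ≤ a) (hb : 0 ≤ b)
    (hab : a + b = 1) :
    Coexistent (fun k => (a : ℂ) • A k + (b : ℂ) • A' k)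
      (fun j => (a : ℂ) • B j + (b : ℂ) • B' j) := by
  obtain ⟨N, M, hM, hMA, hMB⟩ := h
  obtain ⟨N', M', hM', hMA', hMB'⟩ := h'
  exact ⟨N + N', povmMixture a b M M', hM.mixture hM' ha hb hab,
    exists_sum_povmMixture_eq hMA hMA' a b, exists_sum_povmMixture_eq hMB hMB' a b⟩

/-- The set of coexistent pairs of POVMs is convex. -/
theorem coexistent_convex {d n m : ℕ}
    (A A' : Fin n → Matrix (Fin d) (Fin d) ℂ) (B B' : Fin m → Matrix (Fin d) (Fin d) ℂ)
    (hA : IsPOVM A) (hB : IsPOVM B) (hA' : IsPOVM A') (hB' : IsPOVM B')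
    (h : Coexistent A B) (h' : Coexistent A' B')
    (lam : ℝ) (hl0 : 0 ≤ lam) (hl1 : lam ≤ 1) :
    (IsPOVM (fun k => (lam : ℂ) • A k + ((1 - lam : ℝ) : ℂ) • A' k) ∧
      IsPOVM (fun j => (lam : ℂ) • B j + ((1 - lam : ℝ) : ℂ) • B' j)) ∧
    Coexistent (fun k => (lam : ℂ) • A k + ((1 - lam : ℝ) : ℂ) • A' k)
      (fun j => (lam : ℂ) • B j + ((1 - lam : ℝ) : ℂ) • B' j) := by
  have hl1' : 0 ≤ 1 - lam := sub_nonneg.mpr hl1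
  have hsum : lam + (1 - lam) = 1 := add_sub_cancel lam 1
  exact ⟨⟨hA.convex_comb hA' hl0 hl1' hsum, hB.convex_comb hB' hl0 hl1' hsum⟩,
    h.convex_comb h' hl0 hl1' hsum⟩
end

section
/- Let E be a finite-dimensional real normed vector space, let K ⊆ C ⊆ E with K and C convex, K closed with nonempty interior, and suppose there exists a point x ∈ C with x ∉ K. Then the set difference C \ K has nonempty (topological) interior in E. -/
/-! A convex set with nonempty interior lies in the closure of its interior, so the open set
`Kᶜ`, which meets `C` at `x`, also meets `interior C`; and `interior C ∩ Kᶜ` is the interior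
of `C \ K`. -/

theorem Convex.interior_inter_nonempty_of_isOpen {E : Type*} [AddCommGroup E] [Module ℝ E]
    [TopologicalSpace E] [IsTopologicalAddGroup E] [ContinuousSMul ℝ E] {C U : Set E}
    (hC : Convex ℝ C) (hCint : (interior C).Nonempty) (hU : IsOpen U) (hCU : (C ∩ U).Nonempty) :
    (interior C ∩ U).Nonempty := by
  obtain ⟨x, hxC, hxU⟩ := hCU
  have hx : x ∈ closure (interior C) := by
    rw [hC.closure_interior_eq_closure_of_nonempty_interior hCint]
    exact subset_closure hxC
  rw [Set.inter_comm]
  exact mem_closure_iff.1 hx U hU hxU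

theorem nonempty_interior_diff_of_convex_general {E : Type*} [NormedAddCommGroup E] [NormedSpace ℝ E]
    (K C : Set E) (hKC : K ⊆ C) (hC : Convex ℝ C)
    (hKclosed : IsClosed K) (hKint : (interior K).Nonempty)
    (x : E) (hxC : x ∈ C) (hxK : x ∉ K) :
    (interior (C \ K)).Nonempty := by
  have hCint : (interior C).Nonempty := hKint.mono (interior_mono hKC)
  rw [Set.sdiff_eq, interior_inter, hKclosed.isOpen_compl.interior_eq]
  exact hC.interior_inter_nonempty_of_isOpen hCint hKclosed.isOpen_compl ⟨x, hxC, hxK⟩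

/-- If `K ⊆ C` are convex sets in a finite-dimensional real normed space, `K` is closed with
nonempty interior, and `C` contains a point outside `K`, then `C \ K` has nonempty interior. -/
theorem nonempty_interior_diff_of_convex {E : Type*} [NormedAddCommGroup E] [NormedSpace ℝ E]
    [FiniteDimensional ℝ E] (K C : Set E) (hKC : K ⊆ C) (hK : Convex ℝ K) (hC : Convex ℝ C)
    (hKclosed : IsClosed K) (hKint : (interior K).Nonempty)
    (x : E) (hxC : x ∈ C) (hxK : x ∉ K) :
    (interior (C \ K)).Nonempty :=
  nonempty_interior_diff_of_convex_general K C hKC hC hKclosed hKint x hxC hxK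
end
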